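/- Suppose that P is a paraboloid of opening a > 0 that touches a continuous function U : ℝ^{n+1} → ℝ from below at (x₀,z₀) in a convex set S ⊂ ℝ^{n+1}. Then for any ã ≥ a, there exists a paraboloid P̃ of opening ã that touches U from below at (x₀,z₀) in S. -/

import Mathlib

open Set MeasureTheory
open scoped ENNReal

noncomputable section

/-- `h(z) = (s²/(1-s))|z|^{1/s}`. -/
def hFun (s z : ℝ) : ℝ := s ^ 2 / (1 - s) * |z| ^ (1 / s)

/-- `h'(z) = (s/(1-s))|z|^{1/s-2} z` (with `h'(0)=0`). -/
def hDeriv (s z : ℝ) : ℝ := s / (1 - s) * |z| ^ (1 / s - 2) * z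

/-- Monge–Ampère quasi-distance of `h`. -/
def deltaH (s z₀ z : ℝ) : ℝ := hFun s z - hFun s z₀ - hDeriv s z₀ * (z - z₀)

/-- Monge–Ampère quasi-distance of `φ(x)=|x|²/2` on `ℝⁿ`. -/
def deltaE (n : ℕ) (x₀ x : Fin n → ℝ) : ℝ := (∑ i, (x i - x₀ i) ^ 2) / 2

/-- Monge–Ampère quasi-distance of `Φ(x,z) = |x|²/2 + h(z)`. -/
def deltaPhi (n : ℕ) (s : ℝ) (p q : (Fin n → ℝ) × ℝ) : ℝ :=
  deltaE n p.1 q.1 + deltaH s p.2 q.2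

/-- Monge–Ampère section of `Φ` of radius `R` centered at `p`. -/
def sectPhi (n : ℕ) (s R : ℝ) (p : (Fin n → ℝ) × ℝ) : Set ((Fin n → ℝ) × ℝ) :=
  {q | deltaPhi n s p q < R}

/-- Monge–Ampère section of `h` of radius `R` centered at `z₀`. -/
def sectH (s R z₀ : ℝ) : Set ℝ := {z | deltaH s z₀ z < R}

/-- One-dimensional section of `t ↦ t²/2` of radius `R` centered at `t₀`. -/
def sect1 (R t₀ : ℝ) : Set ℝ := {t | (t - t₀) ^ 2 / 2 < R}

/-- Monge–Ampère cube of radius `R` centered at `p`. -/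
def cube (n : ℕ) (s R : ℝ) (p : (Fin n → ℝ) × ℝ) : Set ((Fin n → ℝ) × ℝ) :=
  {q | (∀ i, q.1 i ∈ sect1 R (p.1 i)) ∧ q.2 ∈ sectH s R p.2}

/-- Monge–Ampère measure of `Φ`: `μ_Φ(E) = ∫_E |z|^{1/s-2} dz dx`. -/
def muPhi (n : ℕ) (s : ℝ) (E : Set ((Fin n → ℝ) × ℝ)) : ℝ≥0∞ :=
  ∫⁻ p in E, ENNReal.ofReal (|p.2| ^ (1 / s - 2))

/-- Monge–Ampère measure of `h`: `μ_h(I) = ∫_I |z|^{1/s-2} dz`. -/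
def muH (s : ℝ) (I : Set ℝ) : ℝ≥0∞ :=
  ∫⁻ z in I, ENNReal.ofReal (|z| ^ (1 / s - 2))

/-- Second partial derivative `∂_{ij}` in the `x`-variables. -/
def Dxx (n : ℕ) (U : (Fin n → ℝ) × ℝ → ℝ) (i j : Fin n) (p : (Fin n → ℝ) × ℝ) : ℝ :=
  fderiv ℝ (fun y : Fin n → ℝ =>
    fderiv ℝ (fun y' : Fin n → ℝ => U (y', p.2)) y (Pi.single j 1)) p.1 (Pi.single i 1)

/-- Second partial derivative `∂_{zz}`. -/
def Dzz (n : ℕ) (U : (Fin n → ℝ) × ℝ → ℝ) (p : (Fin n → ℝ) × ℝ) : ℝ :=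
  deriv (fun w => deriv (fun w' => U (p.1, w')) w) p.2

/-- The extension operator `a^{ij}(x) ∂_{ij} + |z|^{2-1/s} ∂_{zz}`. -/
def extOp (n : ℕ) (s : ℝ) (A : (Fin n → ℝ) → Fin n → Fin n → ℝ)
    (U : (Fin n → ℝ) × ℝ → ℝ) (p : (Fin n → ℝ) × ℝ) : ℝ :=
  (∑ i, ∑ j, A p.1 i j * Dxx n U i j p) + |p.2| ^ (2 - 1 / s) * Dzz n U p

/-- Bounded measurable, symmetric, uniformly elliptic coefficients on `Ω`. -/
def UniformlyElliptic (n : ℕ) (lam Lam : ℝ) (Ω : Set (Fin n → ℝ))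
    (A : (Fin n → ℝ) → Fin n → Fin n → ℝ) : Prop :=
  (∀ i j, Measurable fun x => A x i j) ∧
  (∀ x i j, A x i j = A x j i) ∧
  (∀ x ∈ Ω, ∀ ξ : Fin n → ℝ,
    lam * ∑ i, ξ i ^ 2 ≤ ∑ i, ∑ j, A x i j * ξ i * ξ j ∧
    (∑ i, ∑ j, A x i j * ξ i * ξ j) ≤ Lam * ∑ i, ξ i ^ 2)

/-- A paraboloid of opening `a > 0` with vertex `v`. -/
def IsParaboloid (n : ℕ) (s a : ℝ) (v : (Fin n → ℝ) × ℝ) (P : (Fin n → ℝ) × ℝ → ℝ) : Prop :=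
  ∃ c : ℝ, ∀ p, P p = -a * deltaPhi n s v p + c

/-- `P` touches `U` from below at `p₀` in the set `S`. -/
def TouchesBelow (n : ℕ) (P U : (Fin n → ℝ) × ℝ → ℝ)
    (S : Set ((Fin n → ℝ) × ℝ)) (p₀ : (Fin n → ℝ) × ℝ) : Prop :=
  P p₀ = U p₀ ∧ ∀ p ∈ S, P p ≤ U p

/-!
Take `P̃ = P - (ã - a) δ_Φ(p₀, ·)`. Since `Φ` is convex, `δ_Φ(p₀, ·) ≥ 0` vanishes at `p₀`, so `P̃`
still touches `U` from below at `p₀`. It is a paraboloid of opening `ã`: for any `u, v, w`,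
`a δ_Φ(u, ·) + b δ_Φ(v, ·) - (a + b) δ_Φ(w, ·)` is affine with vanishing linear part, hence
constant, as soon as `(a + b) ∇Φ(w) = a ∇Φ(u) + b ∇Φ(v)`; such a `w` exists because
`∇Φ(x, z) = (x, h'(z))` is onto.
-/

lemma rpow_add_mul_rpow_sub_one_mul_sub_le {q t u : ℝ} (hq : 1 ≤ q) (ht : 0 < t) (hu : 0 ≤ u) :
    t ^ q + q * t ^ (q - 1) * (u - t) ≤ u ^ q := by
  have bernoulli := one_add_mul_self_le_rpow_one_add (s := u / t - 1)
    (by linarith [div_nonneg hu ht.le]) hq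
  rw [add_sub_cancel, Real.div_rpow hu ht.le, le_div_iff₀ (by positivity)] at bernoulli
  have htq : t ^ q = t ^ (q - 1) * t := by rw [← Real.rpow_add_one ht.ne', sub_add_cancel]
  calc t ^ q + q * t ^ (q - 1) * (u - t) = (1 + q * (u / t - 1)) * t ^ q := by
        rw [htq]; field_simp
    _ ≤ u ^ q := bernoulli

lemma abs_rpow_add_mul_le {q : ℝ} (hq : 1 < q) (z₀ z : ℝ) :
    |z₀| ^ q + q * |z₀| ^ (q - 2) * z₀ * (z - z₀) ≤ |z| ^ q := by
  rcases eq_or_ne z₀ 0 with rfl | hz₀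
  · simp [Real.zero_rpow (by positivity : q ≠ 0)]
    positivity
  have ht : 0 < |z₀| := abs_pos.mpr hz₀
  have hpow : |z₀| ^ (q - 2) * |z₀| = |z₀| ^ (q - 1) := by
    rw [← Real.rpow_add_one ht.ne']; ring_nf
  have hmul : z₀ * (z - z₀) ≤ |z₀| * (|z| - |z₀|) := by
    nlinarith [le_abs_self (z₀ * z), abs_mul z₀ z, abs_mul_abs_self z₀]
  calc |z₀| ^ q + q * |z₀| ^ (q - 2) * z₀ * (z - z₀)
      ≤ |z₀| ^ q + q * |z₀| ^ (q - 2) * (|z₀| * (|z| - |z₀|)) := by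
        rw [mul_assoc _ z₀]; gcongr
    _ = |z₀| ^ q + q * |z₀| ^ (q - 1) * (|z| - |z₀|) := by rw [← hpow]; ring
    _ ≤ |z| ^ q := rpow_add_mul_rpow_sub_one_mul_sub_le hq.le ht (abs_nonneg z)

section QuasiDistance

variable {n : ℕ} {s : ℝ}

lemma deltaH_nonneg (hs0 : 0 < s) (hs1 : s < 1) (z₀ z : ℝ) : 0 ≤ deltaH s z₀ z := by
  have hK : 0 ≤ s ^ 2 / (1 - s) := div_nonneg (sq_nonneg s) (by linarith)
  have hKq : s / (1 - s) = s ^ 2 / (1 - s) * (1 / s) := by field_simp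
  have tangent := mul_le_mul_of_nonneg_left
    (abs_rpow_add_mul_le ((one_lt_div hs0).2 hs1) z₀ z) hK
  unfold deltaH hFun hDeriv
  rw [hKq]
  linear_combination tangent

lemma deltaPhi_nonneg (hs0 : 0 < s) (hs1 : s < 1) (p q : (Fin n → ℝ) × ℝ) :
    0 ≤ deltaPhi n s p q :=
  add_nonneg (by unfold deltaE; positivity) (deltaH_nonneg hs0 hs1 p.2 q.2)

@[simp]
lemma deltaPhi_self (p : (Fin n → ℝ) × ℝ) : deltaPhi n s p p = 0 := by
  simp [deltaPhi, deltaE, deltaH]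

lemma hDeriv_neg (z : ℝ) : hDeriv s (-z) = -hDeriv s z := by
  simp only [hDeriv, abs_neg]; ring

lemma hDeriv_of_pos {z : ℝ} (hz : 0 < z) : hDeriv s z = s / (1 - s) * z ^ (1 / s - 1) := by
  rw [hDeriv, abs_of_pos hz, mul_assoc, ← Real.rpow_add_one hz.ne']; ring_nf

lemma hDeriv_surjective (hs0 : 0 < s) (hs1 : s < 1) : Function.Surjective (hDeriv s) := by
  have hC : 0 < s / (1 - s) := div_pos hs0 (by linarith)
  suffices hpos : ∀ w, 0 < w → ∃ z, hDeriv s z = w by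
    intro w
    rcases lt_trichotomy w 0 with hw | rfl | hw
    · obtain ⟨z, hz⟩ := hpos (-w) (neg_pos.2 hw)
      exact ⟨-z, by rw [hDeriv_neg, hz, neg_neg]⟩
    · exact ⟨0, by simp [hDeriv]⟩
    · exact hpos w hw
  intro w hw
  have hwC : 0 < w / (s / (1 - s)) := div_pos hw hC
  refine ⟨(w / (s / (1 - s))) ^ (s / (1 - s)), ?_⟩
  have hexp : s / (1 - s) * (1 / s - 1) = 1 := by
    field_simp [(by linarith : 1 - s ≠ 0)]
  rw [hDeriv_of_pos (Real.rpow_pos_of_pos hwC _), ← Real.rpow_mul hwC.le, hexp, Real.rpow_one,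
    mul_div_cancel₀ _ hC.ne']

lemma deltaE_barycenter {a b : ℝ} {u v w : Fin n → ℝ} (hw : (a + b) • w = a • u + b • v)
    (x : Fin n → ℝ) :
    a * deltaE n u x + b * deltaE n v x =
      (a + b) * deltaE n w x + (a * deltaE n u w + b * deltaE n v w) := by
  simp only [deltaE, mul_div_assoc', ← add_div, Finset.mul_sum, ← Finset.sum_add_distrib]
  congr 1
  refine Finset.sum_congr rfl fun i _ => ?_
  have hwi := congrFun hw i
  simp only [Pi.add_apply, Pi.smul_apply, smul_eq_mul] at hwi
  linear_combination (2 * (x i - w i)) * hwi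

lemma deltaH_barycenter {a b u v w : ℝ}
    (hw : (a + b) * hDeriv s w = a * hDeriv s u + b * hDeriv s v) (z : ℝ) :
    a * deltaH s u z + b * deltaH s v z =
      (a + b) * deltaH s w z + (a * deltaH s u w + b * deltaH s v w) := by
  unfold deltaH
  linear_combination (z - w) * hw

lemma exists_deltaPhi_barycenter (hs0 : 0 < s) (hs1 : s < 1) {a b : ℝ} (hab : a + b ≠ 0)
    (u v : (Fin n → ℝ) × ℝ) :
    ∃ w, ∀ p, a * deltaPhi n s u p + b * deltaPhi n s v p =
      (a + b) * deltaPhi n s w p + (a * deltaPhi n s u w + b * deltaPhi n s v w) := by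
  obtain ⟨z, hz⟩ := hDeriv_surjective hs0 hs1 ((a * hDeriv s u.2 + b * hDeriv s v.2) / (a + b))
  refine ⟨((a + b)⁻¹ • (a • u.1 + b • v.1), z), fun p => ?_⟩
  have hx : (a + b) • (a + b)⁻¹ • (a • u.1 + b • v.1) = a • u.1 + b • v.1 :=
    smul_inv_smul₀ hab _
  have hz' : (a + b) * hDeriv s z = a * hDeriv s u.2 + b * hDeriv s v.2 := by
    rw [hz, mul_div_cancel₀ _ hab]
  simp only [deltaPhi]
  linear_combination deltaE_barycenter hx p.1 + deltaH_barycenter hz' p.2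

lemma IsParaboloid.sub_mul_deltaPhi {a b : ℝ} {v : (Fin n → ℝ) × ℝ}
    {P : (Fin n → ℝ) × ℝ → ℝ} (hP : IsParaboloid n s a v P) (hs0 : 0 < s) (hs1 : s < 1)
    (hab : a + b ≠ 0) (q : (Fin n → ℝ) × ℝ) :
    ∃ w, IsParaboloid n s (a + b) w (fun p => P p - b * deltaPhi n s q p) := by
  obtain ⟨c, hc⟩ := hP
  obtain ⟨w, hw⟩ := exists_deltaPhi_barycenter hs0 hs1 hab v q
  refine ⟨w, c - (a * deltaPhi n s v w + b * deltaPhi n s q w), fun p => ?_⟩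
  linear_combination hc p - hw p

lemma TouchesBelow.sub_of_nonneg {P U g : (Fin n → ℝ) × ℝ → ℝ}
    {S : Set ((Fin n → ℝ) × ℝ)} {p₀ : (Fin n → ℝ) × ℝ} (h : TouchesBelow n P U S p₀)
    (hg : ∀ p ∈ S, 0 ≤ g p) (hg₀ : g p₀ = 0) : TouchesBelow n (fun p => P p - g p) U S p₀ :=
  ⟨by simp [hg₀, h.1], fun p hp => by linarith [h.2 p hp, hg p hp]⟩

end QuasiDistance

theorem touch_with_narrower_opening_general
    (n : ℕ) (s : ℝ) (hs0 : 0 < s) (hs1 : s < 1)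
    (S : Set ((Fin n → ℝ) × ℝ))
    (U : (Fin n → ℝ) × ℝ → ℝ)
    (a : ℝ) (ha : 0 < a) (v : (Fin n → ℝ) × ℝ)
    (P : (Fin n → ℝ) × ℝ → ℝ) (hP : IsParaboloid n s a v P)
    (p₀ : (Fin n → ℝ) × ℝ) (htouch : TouchesBelow n P U S p₀)
    (a' : ℝ) (ha' : a ≤ a') :
    ∃ (P' : (Fin n → ℝ) × ℝ → ℝ) (v' : (Fin n → ℝ) × ℝ),
      IsParaboloid n s a' v' P' ∧ TouchesBelow n P' U S p₀ := by
  obtain ⟨v', hP'⟩ := hP.sub_mul_deltaPhi hs0 hs1 (b := a' - a) (by linarith) p₀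
  rw [add_sub_cancel] at hP'
  refine ⟨_, v', hP', htouch.sub_of_nonneg (fun p _ => ?_) (by simp)⟩
  exact mul_nonneg (sub_nonneg.2 ha') (deltaPhi_nonneg hs0 hs1 p₀ p)

/-- Lemma 6.3: if a paraboloid of opening `a > 0` touches a continuous
function `U` from below at `(x₀,z₀)` in a convex set `S`, then for any `ã ≥ a` there is a
paraboloid of opening `ã` touching `U` from below at the same point in `S`. -/
theorem touch_with_narrower_opening
    (n : ℕ) (hn : 1 ≤ n) (s : ℝ) (hs0 : 0 < s) (hs1 : s < 1)
    (S : Set ((Fin n → ℝ) × ℝ)) (hS : Convex ℝ S)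
    (U : (Fin n → ℝ) × ℝ → ℝ) (hU : Continuous U)
    (a : ℝ) (ha : 0 < a) (v : (Fin n → ℝ) × ℝ)
    (P : (Fin n → ℝ) × ℝ → ℝ) (hP : IsParaboloid n s a v P)
    (p₀ : (Fin n → ℝ) × ℝ) (htouch : TouchesBelow n P U S p₀)
    (a' : ℝ) (ha' : a ≤ a') :
    ∃ (P' : (Fin n → ℝ) × ℝ → ℝ) (v' : (Fin n → ℝ) × ℝ),
      IsParaboloid n s a' v' P' ∧ TouchesBelow n P' U S p₀ :=
  touch_with_narrower_opening_general n s hs0 hs1 S U a ha v P hP p₀ htouch a' ha'
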